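/- arXiv:math/9212203 — 2 statements merged into one kernel-verified Lean document; each statement's English description precedes it below -/
import Mathlib

section
/- (Lemma 1(ii)) Let E be a real Banach space, x, y ∈ E linearly independent, α ∈ D(x,y), and a, b ∈ ℝ. Then x + α y is James-orthogonal to a x + b y if and only if x*(a x + b y) = 0 for every x* ∈ S(x + α y). -/
/-- James orthogonality: `x ⊥ y` iff `‖x + α • y‖ ≥ ‖x‖` for every real `α`. -/
def JamesOrth {E : Type*} [NormedAddCommGroup E] [NormedSpace ℝ E] (x y : E) : Prop :=
  ∀ α : ℝ, ‖x‖ ≤ ‖x + α • y‖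

/-- The set of support functionals at `x`: norm-one continuous functionals attaining `‖x‖` at `x`. -/
def suppSet {E : Type*} [NormedAddCommGroup E] [NormedSpace ℝ E] (x : E) :
    Set (E →L[ℝ] ℝ) :=
  {f | ‖f‖ = 1 ∧ f x = ‖x‖}

/-!
Put `z = x + α y`, `w = a x + b y` and `ψ t = ‖z + t w‖`. A support functional `f` at `z` is
an affine minorant of `ψ` touching it at `0`, so whenever `ψ` is differentiable at `0` we get
`f w = ψ'(0)`. James orthogonality says that `ψ` is minimal at `0`, i.e. `ψ'(0) = 0`; conversely,
a single support functional vanishing at `w` already forces `‖z‖ ≤ ψ t`. Differentiability of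
`ψ` at `0` comes from that of `s ↦ ‖x + s y‖` at `α` through the homogeneity
`ψ t = (1 + t a) ‖x + ((α + t b) / (1 + t a)) y‖` for `t` near `0`.
-/

section

variable {E : Type*} [NormedAddCommGroup E] [NormedSpace ℝ E]

lemma apply_le_norm_of_mem_suppSet {z : E} {f : E →L[ℝ] ℝ} (hf : f ∈ suppSet z) (v : E) :
    f v ≤ ‖v‖ :=
  calc f v ≤ ‖f v‖ := le_abs_self _
    _ ≤ ‖f‖ * ‖v‖ := f.le_opNorm v
    _ = ‖v‖ := by rw [hf.1, one_mul]

lemma apply_add_smul_of_mem_suppSet {z : E} {f : E →L[ℝ] ℝ} (hf : f ∈ suppSet z) (w : E)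
    (t : ℝ) : f (z + t • w) = ‖z‖ + t * f w := by
  rw [map_add, map_smul, hf.2, smul_eq_mul]

lemma exists_mem_suppSet {z : E} (hz : z ≠ 0) : ∃ f, f ∈ suppSet z := by
  obtain ⟨f, hf1, hfz⟩ := exists_dual_vector ℝ z (norm_ne_zero_iff.mpr hz)
  exact ⟨f, hf1, by simpa using hfz⟩

lemma jamesOrth_of_mem_suppSet {z w : E} {f : E →L[ℝ] ℝ} (hf : f ∈ suppSet z)
    (hfw : f w = 0) : JamesOrth z w := fun t => by
  simpa [apply_add_smul_of_mem_suppSet hf, hfw] using apply_le_norm_of_mem_suppSet hf (z + t • w)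

lemma JamesOrth.deriv_norm_add_smul_eq_zero {z w : E} (h : JamesOrth z w) :
    deriv (fun t : ℝ => ‖z + t • w‖) 0 = 0 :=
  IsLocalMin.deriv_eq_zero <| Filter.Eventually.of_forall fun t => by simpa using h t

lemma apply_eq_deriv_of_mem_suppSet {z w : E} {f : E →L[ℝ] ℝ} (hf : f ∈ suppSet z)
    (hd : DifferentiableAt ℝ (fun t : ℝ => ‖z + t • w‖) 0) :
    f w = deriv (fun t : ℝ => ‖z + t • w‖) 0 := by
  have hmin : IsLocalMin (fun t : ℝ => ‖z + t • w‖ - t * f w) 0 :=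
    Filter.Eventually.of_forall fun t => by
      have := apply_le_norm_of_mem_suppSet hf (z + t • w)
      rw [apply_add_smul_of_mem_suppSet hf] at this
      simp only [zero_smul, add_zero, zero_mul, sub_zero]
      linarith
  have hderiv : HasDerivAt (fun t : ℝ => ‖z + t • w‖ - t * f w)
      (deriv (fun t : ℝ => ‖z + t • w‖) 0 - f w) 0 := by
    simpa using hd.hasDerivAt.fun_sub ((hasDerivAt_id (0 : ℝ)).mul_const (f w))
  linarith [hmin.hasDerivAt_eq_zero hderiv]

lemma jamesOrth_iff_forall_mem_suppSet_apply_eq_zero {z w : E} (hz : z ≠ 0)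
    (hd : DifferentiableAt ℝ (fun t : ℝ => ‖z + t • w‖) 0) :
    JamesOrth z w ↔ ∀ f ∈ suppSet z, f w = 0 := by
  refine ⟨fun h f hf => ?_, fun h => ?_⟩
  · rw [apply_eq_deriv_of_mem_suppSet hf hd, h.deriv_norm_add_smul_eq_zero]
  · obtain ⟨f, hf⟩ := exists_mem_suppSet hz
    exact jamesOrth_of_mem_suppSet hf (h f hf)

lemma norm_smul_add_smul_eq_mul_norm_add_div_smul (x y : E) {c : ℝ} (hc : 0 < c) (d : ℝ) :
    ‖c • x + d • y‖ = c * ‖x + (d / c) • y‖ := by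
  rw [← abs_of_pos hc, ← Real.norm_eq_abs, ← norm_smul, smul_add, smul_smul, Real.norm_eq_abs,
    abs_of_pos hc, mul_div_cancel₀ _ hc.ne']

lemma differentiableAt_norm_add_smul_add_smul {x y : E} {α : ℝ}
    (hα : DifferentiableAt ℝ (fun s : ℝ => ‖x + s • y‖) α) (a b : ℝ) :
    DifferentiableAt ℝ (fun t : ℝ => ‖(x + α • y) + t • (a • x + b • y)‖) 0 := by
  have hpos : ∀ᶠ t : ℝ in nhds 0, 0 < 1 + t * a :=
    (continuous_const.add (continuous_id.mul continuous_const)).continuousAt.eventually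
      (eventually_gt_nhds (by norm_num : (0 : ℝ) < 1 + 0 * a))
  have heq : (fun t : ℝ => (1 + t * a) * ‖x + ((α + t * b) / (1 + t * a)) • y‖)
      =ᶠ[nhds 0] fun t : ℝ => ‖(x + α • y) + t • (a • x + b • y)‖ := by
    filter_upwards [hpos] with t ht
    rw [← norm_smul_add_smul_eq_mul_norm_add_div_smul x y ht]
    congr 1
    module
  have hslope : DifferentiableAt ℝ (fun t : ℝ => (α + t * b) / (1 + t * a)) 0 :=
    (by fun_prop : DifferentiableAt ℝ (fun t : ℝ => α + t * b) 0).div (by fun_prop) (by simp)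
  have hcomp :
      DifferentiableAt ℝ (fun t : ℝ => ‖x + ((α + t * b) / (1 + t * a)) • y‖) 0 :=
    DifferentiableAt.comp (g := fun s : ℝ => ‖x + s • y‖) 0 (by simpa using hα) hslope
  have hprod := ((differentiableAt_const 1).add (differentiableAt_id.mul_const a)).mul hcomp
  exact hprod.congr_of_eventuallyEq heq.symm

end

theorem jamesOrth_iff_support_functionals_vanish_general
    {E : Type*} [NormedAddCommGroup E] [NormedSpace ℝ E]
    (x y : E) (hxy : LinearIndependent ℝ ![x, y]) (α : ℝ)
    (hα : DifferentiableAt ℝ (fun t : ℝ => ‖x + t • y‖) α) (a b : ℝ) :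
    JamesOrth (x + α • y) (a • x + b • y) ↔
      ∀ f ∈ suppSet (x + α • y), f (a • x + b • y) = 0 := by
  have hz : x + α • y ≠ 0 := fun h => by
    simpa using (LinearIndependent.pair_iff.mp hxy 1 α (by simpa using h)).1
  exact jamesOrth_iff_forall_mem_suppSet_apply_eq_zero hz
    (differentiableAt_norm_add_smul_add_smul hα a b)

theorem jamesOrth_iff_support_functionals_vanish
    {E : Type*} [NormedAddCommGroup E] [NormedSpace ℝ E] [CompleteSpace E]
    (x y : E) (hxy : LinearIndependent ℝ ![x, y]) (α : ℝ)
    (hα : DifferentiableAt ℝ (fun t : ℝ => ‖x + t • y‖) α) (a b : ℝ) :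
    JamesOrth (x + α • y) (a • x + b • y) ↔
      ∀ f ∈ suppSet (x + α • y), f (a • x + b • y) = 0 :=
  jamesOrth_iff_support_functionals_vanish_general x y hxy α hα a b
end

section
/- (Lemma 2) Let E be a real Banach space and x, y ∈ E linearly independent. Then the set {α ∈ ℝ : x + α y ⊥ y} is a nonempty closed bounded interval [m, M], and ‖x + α y‖ = ‖x + m y‖ for every α ∈ [m, M]. -/
open Filter Set

theorem isCompact_setOf_le_of_tendsto_cocompact_atTop {X α : Type*} [TopologicalSpace X]
    [LinearOrder α] [NoMaxOrder α] [TopologicalSpace α] [ClosedIicTopology α] {f : X → α}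
    (hf : Continuous f) (hlim : Tendsto f (cocompact X) atTop) (c : α) :
    IsCompact {x | f x ≤ c} := by
  obtain ⟨K, hK, hKc⟩ := mem_cocompact.mp (hlim.eventually_gt_atTop c)
  refine hK.of_isClosed_subset (isClosed_Iic.preimage hf) fun x hx => ?_
  by_contra hxK
  exact (hKc hxK).not_ge hx

theorem exists_setOf_forall_le_eq_Icc {f : ℝ → ℝ} (hf : Continuous f) (hconv : ConvexOn ℝ univ f)
    (hlim : Tendsto f (cocompact ℝ) atTop) :
    ∃ m M : ℝ, m ≤ M ∧ {α | ∀ β, f α ≤ f β} = Icc m M := by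
  obtain ⟨α₀, hα₀⟩ := hf.exists_forall_le hlim
  have hmin : {α | ∀ β, f α ≤ f β} = {α | f α ≤ f α₀} :=
    Set.ext fun α => ⟨fun h => h α₀, fun h β => h.trans (hα₀ β)⟩
  have hconvex : Convex ℝ {α | f α ≤ f α₀} := by
    simpa only [mem_univ, true_and] using hconv.convex_le (f α₀)
  have hIcc := eq_Icc_of_connected_compact (s := {α | f α ≤ f α₀})
    ⟨⟨α₀, le_refl (f α₀)⟩, hconvex.isPreconnected⟩
    (isCompact_setOf_le_of_tendsto_cocompact_atTop hf hlim (f α₀))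
  refine ⟨_, _, ?_, hmin.trans hIcc⟩
  have hα₀_mem : α₀ ∈ Icc _ _ := hIcc.subset (le_refl (f α₀))
  exact hα₀_mem.1.trans hα₀_mem.2

section LineThrough

variable {E : Type*} [NormedAddCommGroup E] [NormedSpace ℝ E]

theorem jamesOrth_add_smul_iff {x y : E} {α : ℝ} :
    JamesOrth (x + α • y) y ↔ ∀ β : ℝ, ‖x + α • y‖ ≤ ‖x + β • y‖ := by
  simp only [JamesOrth, add_assoc, ← add_smul]
  refine ⟨fun h β => ?_, fun h β => h (α + β)⟩
  simpa using h (β - α)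

theorem convexOn_norm_add_smul (x y : E) : ConvexOn ℝ univ fun t : ℝ => ‖x + t • y‖ :=
  ((convexOn_norm convex_univ).translate_right x).comp_linearMap
    (LinearMap.toSpanSingleton ℝ E y)

theorem tendsto_norm_add_smul_cocompact_atTop (x : E) {y : E} (hy : y ≠ 0) :
    Tendsto (fun t : ℝ => ‖x + t • y‖) (cocompact ℝ) atTop := by
  have hlower (t : ℝ) : ‖t‖ * ‖y‖ - ‖x‖ ≤ ‖x + t • y‖ :=
    calc ‖t‖ * ‖y‖ - ‖x‖ = ‖(x + t • y) - x‖ - ‖x‖ := by rw [add_sub_cancel_left, norm_smul]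
      _ ≤ ‖x + t • y‖ := by linarith [norm_sub_le (x + t • y) x]
  refine tendsto_atTop_mono hlower (tendsto_atTop_add_const_right _ _ ?_)
  exact tendsto_norm_cocompact_atTop.atTop_mul_const (norm_pos_iff.mpr hy)

end LineThrough

theorem orthogonality_set_is_closed_interval_general
    {E : Type*} [NormedAddCommGroup E] [NormedSpace ℝ E]
    (x y : E) (hxy : LinearIndependent ℝ ![x, y]) :
    ∃ m M : ℝ, m ≤ M ∧ {α : ℝ | JamesOrth (x + α • y) y} = Set.Icc m M ∧
      ∀ α ∈ Set.Icc m M, ‖x + α • y‖ = ‖x + m • y‖ := by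
  have hy : y ≠ 0 := by simpa using hxy.ne_zero 1
  obtain ⟨m, M, hmM, hmin⟩ := exists_setOf_forall_le_eq_Icc (by fun_prop)
    (convexOn_norm_add_smul x y) (tendsto_norm_add_smul_cocompact_atTop x hy)
  have hmem : ∀ α ∈ Icc m M, ∀ β : ℝ, ‖x + α • y‖ ≤ ‖x + β • y‖ :=
    fun α hα => hmin.symm.subset hα
  refine ⟨m, M, hmM, by simpa only [jamesOrth_add_smul_iff] using hmin, fun α hα => ?_⟩
  exact le_antisymm (hmem α hα m) (hmem m (left_mem_Icc.mpr hmM) α)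

theorem orthogonality_set_is_closed_interval
    {E : Type*} [NormedAddCommGroup E] [NormedSpace ℝ E] [CompleteSpace E]
    (x y : E) (hxy : LinearIndependent ℝ ![x, y]) :
    ∃ m M : ℝ, m ≤ M ∧ {α : ℝ | JamesOrth (x + α • y) y} = Set.Icc m M ∧
      ∀ α ∈ Set.Icc m M, ‖x + α • y‖ = ‖x + m • y‖ :=
  orthogonality_set_is_closed_interval_general x y hxy
end
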